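/- arXiv:2102.12710 — 2 statements merged into one kernel-verified Lean document; each statement's English description precedes it below -/
import Mathlib

section
/- On the Lie algebra rh₃ ([e₁,e₂] = e₃), the pair (ω, K) with ω = e¹⁴ + e²³ and K = E₁₁ − E₂₂ + E₃₃ − E₄₄ is a para-Kähler structure: K² = Id, N_K = 0, ω is a nondegenerate 2-cocycle (ω([u,v],w) + ω([v,w],u) + ω([w,u],v) = 0), and ω(Ku, Kv) = −ω(u,v). -/
/-- The bracket of the Lie algebra `rh₃` on `ℝ⁴` (0-indexed): only nonzero bracket
`[e₀,e₁] = e₂`. -/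
def brRH3 (u v : Fin 4 → ℝ) : Fin 4 → ℝ :=
  ![0, 0, u 0 * v 1 - u 1 * v 0, 0]

/-- The endomorphism `K = E₁₁ − E₂₂ + E₃₃ − E₄₄`. -/
def Krh3 (u : Fin 4 → ℝ) : Fin 4 → ℝ := ![u 0, -u 1, u 2, -u 3]

/-- The 2-form `ω = e¹⁴ + e²³` (0-indexed: `e⁰³ + e¹²`). -/
def omRH3 (u v : Fin 4 → ℝ) : ℝ :=
  u 0 * v 3 - u 3 * v 0 + (u 1 * v 2 - u 2 * v 1)

/-- On `rh₃`, the pair `(ω, K)` is a para-Kähler structure: `K² = Id`, `N_K = 0`,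
`ω` is a nondegenerate 2-cocycle, and `ω(Ku, Kv) = −ω(u,v)`. -/
theorem stmt6 :
    (∀ u, Krh3 (Krh3 u) = u) ∧
    (∀ u v, brRH3 u v + brRH3 (Krh3 u) (Krh3 v)
        - Krh3 (brRH3 (Krh3 u) v) - Krh3 (brRH3 u (Krh3 v)) = 0) ∧
    (∀ u, (∀ v, omRH3 u v = 0) → u = 0) ∧
    (∀ u v w, omRH3 (brRH3 u v) w + omRH3 (brRH3 v w) u + omRH3 (brRH3 w u) v = 0) ∧
    (∀ u v, omRH3 (Krh3 u) (Krh3 v) = -omRH3 u v) := by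
  refine ⟨fun u => ?_, fun u v => ?_, fun u h => ?_, fun u v w => ?_, fun u v => ?_⟩
  · funext i; fin_cases i <;> simp [Krh3]
  · funext i; fin_cases i <;> (simp [brRH3, Krh3]; try ring)
  · funext i
    fin_cases i
    · have := h ![0,0,0,1]; simpa [omRH3] using this
    · have := h ![0,0,1,0]; simpa [omRH3] using this
    · have := h ![0,1,0,0]; have h2 := this; simp [omRH3] at h2; simpa using h2
    · have := h ![1,0,0,0]; have h2 := this; simp [omRH3] at h2; simpa using h2
  · simp [omRH3, brRH3]; ring
  · simp [omRH3, Krh3]; ring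
end

section
/- Let (U, ·) and (U*, ·) be finite-dimensional left-symmetric algebras on a vector space and its dual, and extend the product to U ⊕ U* by (X+α)·(Y+β) = X·Y − Lᵗ_α Y − Lᵗ_X β + α·β. If the commutator [a,b] = a·b − b·a satisfies the Jacobi identity, then the bilinear form ω₀(u+α, v+β) = β(u) − α(v) is a 2-cocycle: ω₀([a,b],c) + ω₀([b,c],a) + ω₀([c,a],b) = 0 for all a,b,c ∈ U ⊕ U*. -/
/-- Let `(U, ·)` and `(U*, ·)` be left-symmetric algebras, with the product extended
to `U ⊕ U*` by `(X+α)·(Y+β) = X·Y − Lᵗ_α Y − Lᵗ_X β + α·β`. If the commutator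
satisfies the Jacobi identity, then `ω₀(u+α, v+β) = β(u) − α(v)` is a 2-cocycle. -/
theorem stmt17 (U : Type*) [AddCommGroup U] [Module ℝ U] [FiniteDimensional ℝ U]
    (mU : U →ₗ[ℝ] U →ₗ[ℝ] U)
    (mD : Module.Dual ℝ U →ₗ[ℝ] Module.Dual ℝ U →ₗ[ℝ] Module.Dual ℝ U)
    (hU : ∀ u v w, mU (mU u v) w - mU u (mU v w) = mU (mU v u) w - mU v (mU u w))
    (hD : ∀ α β γ, mD (mD α β) γ - mD α (mD β γ) = mD (mD β α) γ - mD β (mD α γ))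
    (Lta : Module.Dual ℝ U → U →ₗ[ℝ] U)
    (hLta : ∀ α Y γ, γ (Lta α Y) = mD α γ Y)
    (p : (U × Module.Dual ℝ U) → (U × Module.Dual ℝ U) → (U × Module.Dual ℝ U))
    (hp : ∀ (X Y : U) (α β : Module.Dual ℝ U),
      p (X, α) (Y, β) = (mU X Y - Lta α Y, mD α β - β ∘ₗ mU X))
    (hJac : ∀ a b c : U × Module.Dual ℝ U,
      (p (p a b - p b a) c - p c (p a b - p b a))
      + (p (p b c - p c b) a - p a (p b c - p c b))
      + (p (p c a - p a c) b - p b (p c a - p a c)) = 0) :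
    ∀ a b c : U × Module.Dual ℝ U,
      (c.2 (p a b - p b a).1 - (p a b - p b a).2 c.1)
      + (a.2 (p b c - p c b).1 - (p b c - p c b).2 a.1)
      + (b.2 (p c a - p a c).1 - (p c a - p a c).2 b.1) = 0 := by
  rintro ⟨X, α⟩ ⟨Y, β⟩ ⟨Z, γ⟩
  simp only [hp, Prod.fst_sub, Prod.snd_sub, map_sub, LinearMap.sub_apply,
    LinearMap.coe_comp, Function.comp_apply, hLta]
  ring
end
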